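/- arXiv:1607.08521 — 2 statements merged into one kernel-verified Lean document; each statement's English description precedes it below -/
import Mathlib

section
/- As x → ∞, ∑_{1 ≤ n ≤ x/2} 1/(n² log(x/n)) = (π²/6)·(1/log x) + O(1/log² x). -/
/-!
For `1 ≤ n ≤ x / 2` write `L = log x` and `ℓ = log n`, so that `log (x / n) = L - ℓ ≥ log 2`.
Then `1 / (L - ℓ) - 1 / L = (ℓ + ℓ² / (L - ℓ)) / L²` is at most `(ℓ + ℓ² / log 2) / L²`, and since
`∑ ℓ^k / n²` converges, replacing `log (x / n)` by `log x` costs `O(1 / L²)`. What remains is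
`(∑_{n ≤ x/2} 1 / n²) / L`, and the Basel tail beyond `x / 2` is `O(1 / x) = o(1 / L)`.
-/

open Filter Asymptotics Finset Real

theorem summable_log_pow_div_rpow (k : ℕ) {p : ℝ} (hp : 1 < p) :
    Summable (fun n : ℕ => log n ^ k / (n : ℝ) ^ p) := by
  have hs : 0 < (p - 1) / 2 := by linarith
  have hlog : (fun x : ℝ => log x ^ k / x ^ p) =O[atTop]
      fun x => x ^ ((p - 1) / 2 - p) := by
    refine ((isLittleO_log_rpow_rpow_atTop k hs).isBigO.mul
      (isBigO_refl (fun x => (x ^ p)⁻¹) _)).congr' (.of_forall fun x => by simp [div_eq_mul_inv]) ?_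
    filter_upwards [eventually_gt_atTop 0] with x hx
    rw [Real.rpow_sub hx, ← div_eq_mul_inv]
  have hp' : (p - 1) / 2 - p < -1 := by linarith
  exact summable_of_isBigO_nat (Real.summable_nat_rpow.2 hp')
    (hlog.comp_tendsto tendsto_natCast_atTop_atTop)

theorem abs_sum_Icc_one_div_sq_sub_pi_sq_div_six_le (N : ℕ) :
    |∑ n ∈ Icc 1 N, 1 / (n : ℝ) ^ 2 - π ^ 2 / 6| ≤ 2 / ((N : ℝ) + 1) := by
  have hsum_range : ∑ n ∈ Icc 1 N, 1 / (n : ℝ) ^ 2 = ∑ n ∈ range (N + 1), 1 / (n : ℝ) ^ 2 := by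
    rw [range_eq_Ico, sum_eq_sum_Ico_succ_bot N.succ_pos, ← Ico_add_one_right_eq_Icc]
    simp
  have htail : ∀ M ≥ N + 1,
      ∑ n ∈ range M, 1 / (n : ℝ) ^ 2 - ∑ n ∈ range (N + 1), 1 / (n : ℝ) ^ 2 ≤
        2 / ((N : ℝ) + 1) := by
    intro M hM
    rw [← sum_Ico_eq_sub _ hM, Ico_add_one_left_eq_Ioo]
    simpa [one_div] using sum_Ioo_inv_sq_le (α := ℝ) N M
  have hupper : π ^ 2 / 6 ≤ ∑ n ∈ Icc 1 N, 1 / (n : ℝ) ^ 2 + 2 / (N + 1) := by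
    refine le_of_tendsto hasSum_zeta_two.tendsto_sum_nat ?_
    filter_upwards [eventually_ge_atTop (N + 1)] with M hM
    linarith [htail M hM, hsum_range]
  have hlower : ∑ n ∈ Icc 1 N, 1 / (n : ℝ) ^ 2 ≤ π ^ 2 / 6 :=
    sum_le_hasSum _ (fun n _ => by positivity) hasSum_zeta_two
  rw [abs_le]
  constructor <;> linarith

theorem abs_one_div_sub_sub_one_div_le {L ℓ c : ℝ} (hc : 0 < c) (hℓ : 0 ≤ ℓ) (h : c ≤ L - ℓ) :
    |1 / (L - ℓ) - 1 / L| ≤ (ℓ + ℓ ^ 2 / c) / L ^ 2 := by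
  have hd : 0 < L - ℓ := hc.trans_le h
  have hL : 0 < L := by linarith
  have hexpand : 1 / (L - ℓ) - 1 / L = (ℓ + ℓ ^ 2 / (L - ℓ)) / L ^ 2 := by
    field_simp
    ring
  rw [hexpand, abs_of_nonneg (by positivity)]
  gcongr

theorem abs_sum_one_div_sq_mul_log_div_sub_le (x : ℝ) :
    |∑ n ∈ Icc 1 ⌊x / 2⌋₊, 1 / ((n : ℝ) ^ 2 * log (x / n)) -
        (∑ n ∈ Icc 1 ⌊x / 2⌋₊, 1 / (n : ℝ) ^ 2) * (1 / log x)| ≤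
      (∑' n : ℕ, (log n + log n ^ 2 / log 2) / (n : ℝ) ^ 2) / log x ^ 2 := by
  have hterm : ∀ n ∈ Icc 1 ⌊x / 2⌋₊,
      |1 / ((n : ℝ) ^ 2 * log (x / n)) - 1 / (n : ℝ) ^ 2 * (1 / log x)| ≤
        (log n + log n ^ 2 / log 2) / (n : ℝ) ^ 2 / log x ^ 2 := by
    intro n hn
    obtain ⟨hn1, hnx⟩ := mem_Icc.1 hn
    have hn0 : (0 : ℝ) < n := by exact_mod_cast hn1
    have hnx : (n : ℝ) ≤ x / 2 := (Nat.le_floor_iff' (by omega)).1 hnx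
    have hx : 0 < x := by linarith
    have hlog_div : log (x / n) = log x - log n := Real.log_div hx.ne' hn0.ne'
    have hlog2 : log 2 ≤ log x - log n := by
      rw [← hlog_div]
      exact Real.log_le_log two_pos (by rw [le_div_iff₀ hn0]; linarith)
    have hdiff := abs_one_div_sub_sub_one_div_le (Real.log_pos one_lt_two)
      (Real.log_natCast_nonneg n) hlog2
    calc _ = |1 / (n : ℝ) ^ 2 * (1 / (log x - log n) - 1 / log x)| := by
          rw [hlog_div, mul_sub (1 / (n : ℝ) ^ 2), one_div_mul_one_div, one_div_mul_one_div]
      _ = 1 / (n : ℝ) ^ 2 * |1 / (log x - log n) - 1 / log x| := by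
          rw [abs_mul, abs_of_pos (by positivity)]
      _ ≤ 1 / (n : ℝ) ^ 2 * ((log n + log n ^ 2 / log 2) / log x ^ 2) := by
          gcongr
      _ = _ := by ring
  have hsummable :
      Summable fun n : ℕ => (log n + log n ^ 2 / log 2) / (n : ℝ) ^ 2 := by
    have h1 : Summable fun n : ℕ => log n / (n : ℝ) ^ 2 := by
      simpa using summable_log_pow_div_rpow 1 one_lt_two
    have h2 : Summable fun n : ℕ => log n ^ 2 / (n : ℝ) ^ 2 := by
      simpa using summable_log_pow_div_rpow 2 one_lt_two
    simp_rw [add_div, div_right_comm _ (log 2)]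
    exact h1.add (h2.div_const _)
  rw [sum_mul, ← sum_sub_distrib]
  calc _ ≤ _ := abs_sum_le_sum_abs _ _
    _ ≤ _ := sum_le_sum hterm
    _ = (∑ n ∈ Icc 1 ⌊x / 2⌋₊, (log n + log n ^ 2 / log 2) / (n : ℝ) ^ 2) /
          log x ^ 2 := (sum_div ..).symm
    _ ≤ _ := by
      gcongr
      exact hsummable.sum_le_tsum _ fun n _ => by
        have := Real.log_natCast_nonneg n
        positivity

theorem sum_inv_nsq_log_asymptotic :
    (fun x : ℝ => (∑ n ∈ Finset.Icc 1 ⌊x / 2⌋₊, 1 / ((n : ℝ) ^ 2 * Real.log (x / n))) -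
        (Real.pi ^ 2 / 6) * (1 / Real.log x)) =O[atTop]
      (fun x : ℝ => 1 / (Real.log x) ^ 2) := by
  have hlog_approx : (fun x => ∑ n ∈ Icc 1 ⌊x / 2⌋₊, 1 / ((n : ℝ) ^ 2 * log (x / n)) -
      (∑ n ∈ Icc 1 ⌊x / 2⌋₊, 1 / (n : ℝ) ^ 2) * (1 / log x)) =O[atTop]
      fun x => 1 / log x ^ 2 :=
    .of_bound _ (.of_forall fun x => by
      simpa [div_eq_mul_inv, abs_of_nonneg] using abs_sum_one_div_sq_mul_log_div_sub_le x)
  have hbasel : (fun x : ℝ => ∑ n ∈ Icc 1 ⌊x / 2⌋₊, 1 / (n : ℝ) ^ 2 - π ^ 2 / 6) =O[atTop]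
      fun x => 1 / x := by
    refine .of_bound 4 ?_
    filter_upwards [eventually_gt_atTop 0] with x hx
    calc _ ≤ 2 / ((⌊x / 2⌋₊ : ℝ) + 1) := abs_sum_Icc_one_div_sq_sub_pi_sq_div_six_le _
      _ ≤ 2 / (x / 2) := by gcongr; exact (Nat.lt_floor_add_one _).le
      _ = 4 * ‖1 / x‖ := by rw [norm_div, norm_one, Real.norm_of_nonneg hx.le]; ring
  have hinv : (fun x : ℝ => 1 / x) =O[atTop] fun x => 1 / log x := by
    simpa only [one_div, id] using (isLittleO_log_id_atTop.isBigO.inv_rev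
      (by filter_upwards [eventually_gt_atTop 1] with x hx h using absurd h (Real.log_pos hx).ne'))
  have hbasel_div :=
    ((hbasel.trans hinv).mul (isBigO_refl (fun x => 1 / log x) atTop)).congr_right
      (g₂ := fun x => 1 / log x ^ 2) fun x => by ring
  exact (hlog_approx.add hbasel_div).congr_left fun x => by ring
end

section
/- As x → ∞, ∫_1^{x/2} dt/(t² log²(x/t)) = O(1/log² x). -/
/-!
Split the integral at `√x`. For `t ≤ √x` we have `log (x / t) ≥ (log x) / 2`, so that part is at
most `4 / log² x * ∫₁^∞ dt / t² = 4 / log² x`. For `√x ≤ t ≤ x / 2` we only have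
`log (x / t) ≥ log 2`, which bounds that part by `1 / (log² 2 * √x)`; this is still
`O(1 / log² x)` because `log² x ≤ 16 √x`.
-/

open Filter Asymptotics Real Set intervalIntegral MeasureTheory
open scoped Interval

lemma integral_inv_sq {a b : ℝ} (ha : 0 < a) (hab : a ≤ b) :
    ∫ t in a..b, (t ^ 2)⁻¹ = a⁻¹ - b⁻¹ := by
  have h0 : (0 : ℝ) ∉ [[a, b]] := by
    rw [uIcc_of_le hab]; exact fun h => ha.not_ge h.1
  have := integral_zpow (n := -2) (Or.inr ⟨by decide, h0⟩)
  simp only [zpow_neg, zpow_two] at this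
  rw [show (fun t : ℝ => (t ^ 2)⁻¹) = fun t => (t * t)⁻¹ by simp [sq], this]
  norm_num
  ring

lemma integral_le_div_of_le_div_sq {f : ℝ → ℝ} {a b c : ℝ} (ha : 0 < a) (hab : a ≤ b)
    (hc : 0 ≤ c) (hf : IntervalIntegrable f volume a b) (hle : ∀ t ∈ Icc a b, f t ≤ c / t ^ 2) :
    ∫ t in a..b, f t ≤ c / a := by
  have hg : IntervalIntegrable (fun t => c / t ^ 2) volume a b := by
    refine (ContinuousOn.div continuousOn_const (continuousOn_pow 2) ?_).intervalIntegrable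
    intro t ht
    rw [uIcc_of_le hab] at ht
    exact pow_ne_zero 2 (ha.trans_le ht.1).ne'
  calc ∫ t in a..b, f t ≤ ∫ t in a..b, c / t ^ 2 := integral_mono_on hab hf hg hle
    _ = c * (a⁻¹ - b⁻¹) := by
      simp_rw [div_eq_mul_inv]
      rw [intervalIntegral.integral_const_mul, integral_inv_sq ha hab]
    _ ≤ c / a := by
      rw [div_eq_mul_inv]
      exact mul_le_mul_of_nonneg_left (sub_le_self _ (inv_nonneg.2 (ha.le.trans hab))) hc

lemma one_div_sq_mul_sq_le_of_le (t : ℝ) {m y : ℝ} (hm : 0 < m) (hy : m ≤ y) :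
    1 / (t ^ 2 * y ^ 2) ≤ 1 / m ^ 2 / t ^ 2 := by
  rw [div_div, mul_comm (m ^ 2)]
  rcases eq_or_ne t 0 with rfl | ht
  · simp
  · gcongr

lemma half_log_le_log_div {x t : ℝ} (ht : 0 < t) (htx : t ^ 2 ≤ x) : log x / 2 ≤ log (x / t) := by
  have hx : 0 < x := (pow_pos ht 2).trans_le htx
  rw [log_div hx.ne' ht.ne']
  have := log_le_log (by positivity) htx
  rw [log_pow] at this
  push_cast at this
  linarith

lemma log_two_le_log_div {x t : ℝ} (ht : 0 < t) (htx : t ≤ x / 2) : log 2 ≤ log (x / t) :=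
  log_le_log two_pos (by rw [le_div_iff₀ ht]; linarith [(le_div_iff₀' two_pos).1 htx])

lemma sq_log_le_sqrt {x : ℝ} (hx : 1 ≤ x) : log x ^ 2 ≤ 16 * √x := by
  have h := log_le_rpow_div (zero_le_one.trans hx) (ε := 1 / 4) (by norm_num)
  calc log x ^ 2 ≤ (x ^ (1 / 4 : ℝ) / (1 / 4)) ^ 2 := by gcongr; exact log_nonneg hx
    _ = 16 * √x := by
      rw [sqrt_eq_rpow, div_pow, ← rpow_natCast, ← rpow_mul (zero_le_one.trans hx)]
      norm_num
      ring

lemma continuousOn_one_div_sq_mul_log_div_sq {x : ℝ} (hx : 0 < x) :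
    ContinuousOn (fun t => 1 / (t ^ 2 * log (x / t) ^ 2)) (Ioo 0 x) := by
  refine continuousOn_const.div (by fun_prop (disch := grind)) fun t ⟨ht0, htx⟩ => ?_
  have : 0 < log (x / t) := log_pos ((one_lt_div ht0).2 htx)
  positivity

lemma intervalIntegrable_one_div_sq_mul_log_div_sq {x a b : ℝ} (ha : 0 < a) (hab : a ≤ b)
    (hbx : b < x) :
    IntervalIntegrable (fun t => 1 / (t ^ 2 * log (x / t) ^ 2)) volume a b := by
  refine ContinuousOn.intervalIntegrable ((continuousOn_one_div_sq_mul_log_div_sq ?_).mono ?_)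
  · linarith
  · rw [uIcc_of_le hab]
    exact Icc_subset_Ioo ha hbx

lemma sqrt_le_half_self {x : ℝ} (hx : 4 ≤ x) : √x ≤ x / 2 := by
  nlinarith [sq_sqrt (by linarith : (0 : ℝ) ≤ x), sqrt_nonneg x]

lemma integral_one_div_sq_mul_log_div_sq_one_sqrt_le {x : ℝ} (hx : 1 < x) :
    ∫ t in (1 : ℝ)..√x, 1 / (t ^ 2 * log (x / t) ^ 2) ≤ 4 / log x ^ 2 := by
  have h1 : 1 ≤ √x := one_le_sqrt.2 hx.le
  have hlog : 0 < log x / 2 := by linarith [log_pos hx]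
  have := integral_le_div_of_le_div_sq one_pos h1 (by positivity)
    (intervalIntegrable_one_div_sq_mul_log_div_sq one_pos h1 (sqrt_lt_self_iff.2 hx))
    fun t ⟨ht1, hts⟩ => one_div_sq_mul_sq_le_of_le t hlog <|
      half_log_le_log_div (by linarith) ((le_sqrt (by linarith) (by linarith)).1 hts)
  convert this using 1
  ring

lemma integral_one_div_sq_mul_log_div_sq_sqrt_half_le {x : ℝ} (hx : 4 ≤ x) :
    ∫ t in √x..x / 2, 1 / (t ^ 2 * log (x / t) ^ 2) ≤ 16 / log 2 ^ 2 / log x ^ 2 := by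
  have hs : 0 < √x := sqrt_pos.2 (by linarith)
  calc ∫ t in √x..x / 2, 1 / (t ^ 2 * log (x / t) ^ 2) ≤ 1 / log 2 ^ 2 / √x :=
        integral_le_div_of_le_div_sq hs (sqrt_le_half_self hx) (by positivity)
          (intervalIntegrable_one_div_sq_mul_log_div_sq hs (sqrt_le_half_self hx) (by linarith))
          fun t ht => one_div_sq_mul_sq_le_of_le t (log_pos one_lt_two)
            (log_two_le_log_div (hs.trans_le ht.1) ht.2)
    _ ≤ 16 / log 2 ^ 2 / log x ^ 2 := by
      have hL : 0 < log x := log_pos (by linarith)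
      rw [div_div, div_div, div_le_div_iff₀ (by positivity) (by positivity)]
      have := sq_log_le_sqrt (by linarith : (1 : ℝ) ≤ x)
      nlinarith [(by positivity : (0 : ℝ) < log 2 ^ 2)]

theorem integral_one_div_tsq_logsq_isBigO :
    (fun x : ℝ => ∫ t in (1 : ℝ)..(x / 2), 1 / (t ^ 2 * (Real.log (x / t)) ^ 2)) =O[atTop]
      (fun x : ℝ => 1 / (Real.log x) ^ 2) := by
  refine isBigO_iff.2 ⟨4 + 16 / log 2 ^ 2, ?_⟩
  filter_upwards [eventually_ge_atTop 4] with x hx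
  have h1 : 1 ≤ √x := one_le_sqrt.2 (by linarith)
  have hs : √x ≤ x / 2 := sqrt_le_half_self hx
  have hnonneg : 0 ≤ ∫ t in (1 : ℝ)..(x / 2), 1 / (t ^ 2 * log (x / t) ^ 2) :=
    integral_nonneg (by linarith) fun t _ => by positivity
  rw [norm_of_nonneg hnonneg, norm_of_nonneg (by positivity),
    ← integral_add_adjacent_intervals
      (intervalIntegrable_one_div_sq_mul_log_div_sq one_pos h1 (by linarith))
      (intervalIntegrable_one_div_sq_mul_log_div_sq (by linarith) hs (by linarith))]
  calc _ ≤ 4 / log x ^ 2 + 16 / log 2 ^ 2 / log x ^ 2 :=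
        add_le_add (integral_one_div_sq_mul_log_div_sq_one_sqrt_le (by linarith))
          (integral_one_div_sq_mul_log_div_sq_sqrt_half_le hx)
    _ = _ := by ring
end
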